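/- Let f(φ) = Σ_{s∈S} f_s e^{i s·φ} with S ⊂ ℤ^n finite and |s|₁ ≤ m for all s ∈ S, and suppose the set {s ∈ ℤ^n : |s|₁ ≤ m, s·W ≠ 0} is nonempty; let κ(W,m) = min{|s·W| : s ∈ ℤ^n, |s|₁ ≤ m, s·W ≠ 0} > 0. Then for every T > 0 and every φ ∈ ℝ^n, |(1/T) ∫₀^T f(φ + tW) dt − ⟨f⟩_W(φ)| ≤ (2/(T κ(W,m))) Σ_{s∈S} |f_s|. -/

import Mathlib

/-!
Each mode `e^{i s·φ}` of `f` evolves along the flow as `e^{i s·φ} e^{i (s·W) t}`. If `s·W ≠ 0`,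
its time average differs from `0` by at most `2 / (T |s·W|) ≤ 2 / (T κ)`; if `s·W = 0` it is
constant. The resonant average keeps exactly the resonant modes: the coordinates of `s` in the
unimodular basis `ζ` are the integers `s·ηʲ`, and for `|s|₁ ≤ m` the mode is resonant iff
`s ∈ 𝒜^R = span(ζ¹, …, ζʳ)`, i.e. iff `s·ηʲ = 0` for all `j > r`; integrating `e^{i (s·ηʲ) θ}`
over a period then gives `1` or `0` accordingly.
-/

open MeasureTheory

namespace Matrix

variable {ι : Type*} [Fintype ι] [DecidableEq ι]

theorem mem_span_cols_iff {K : Type*} [Field K] (M : Matrix ι ι K) (hM : IsUnit M.det)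
    (P : Set ι) (x : ι → K) :
    x ∈ Submodule.span K ((fun j i => M i j) '' P) ↔ ∀ j ∉ P, (M⁻¹ *ᵥ x) j = 0 := by
  let e := M.toLinearEquiv' (M.invertibleOfIsUnitDet hM)
  let b : Module.Basis ι K (ι → K) := (Pi.basisFun K ι).map e
  have hb : ⇑b = fun j i => M i j := by
    funext j i
    simp [b, e, toLinearEquiv']
  have hrepr : ∀ j, b.repr x j = (M⁻¹ *ᵥ x) j := by
    have : e.symm x = M⁻¹ *ᵥ x := by
      rw [LinearEquiv.symm_apply_eq]
      simp [e, toLinearEquiv', mulVec_mulVec, mul_nonsing_inv M hM]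
    simp [b, this]
  rw [← hb, b.mem_span_image]
  simp only [Set.subset_def, Finset.mem_coe, Finsupp.mem_support_iff, hrepr]
  exact forall_congr' fun j => not_imp_comm

theorem dotProduct_inv_transpose_mulVec_single {R : Type*} [CommRing R] (M : Matrix ι ι R)
    (x : ι → R) (j : ι) : x ⬝ᵥ (Mᵀ⁻¹ *ᵥ Pi.single j 1) = (M⁻¹ *ᵥ x) j := by
  rw [← transpose_nonsing_inv, mulVec_single_one, dotProduct_comm]
  rfl

variable {R : Type*} [CommRing R] {Z : Matrix ι ι ℤ}

theorem map_intCast_nonsing_inv_mul (hZ : IsUnit Z.det) :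
    Z⁻¹.map (Int.cast : ℤ → R) * Z.map Int.cast = 1 := by
  change Z⁻¹.map (Int.castRingHom R) * Z.map (Int.castRingHom R) = 1
  rw [← Matrix.map_mul, nonsing_inv_mul Z hZ, Matrix.map_one _ (map_zero _) (map_one _)]

theorem isUnit_det_map_intCast (hZ : IsUnit Z.det) : IsUnit (Z.map (Int.cast : ℤ → R)).det :=
  isUnit_det_of_left_inverse (map_intCast_nonsing_inv_mul hZ)

theorem inv_map_intCast_mulVec (hZ : IsUnit Z.det) (x : ι → ℤ) (j : ι) :
    ((Z.map (Int.cast : ℤ → R))⁻¹ *ᵥ fun i => (x i : R)) j = ((Z⁻¹ *ᵥ x) j : R) := by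
  rw [inv_eq_left_inv (map_intCast_nonsing_inv_mul hZ)]
  exact ((Int.castRingHom R).map_mulVec Z⁻¹ x j).symm

theorem exists_intCast_dotProduct_inv_transpose_mulVec_single (hZ : IsUnit Z.det) (x : ι → ℤ)
    (j : ι) : ∃ z : ℤ,
      (fun i => (x i : R)) ⬝ᵥ ((Z.map (Int.cast : ℤ → R))ᵀ⁻¹ *ᵥ Pi.single j 1) = z :=
  ⟨_, (dotProduct_inv_transpose_mulVec_single _ _ j).trans (inv_map_intCast_mulVec hZ x j)⟩

end Matrix

theorem dotProduct_eq_zero_of_mem_span {ι K : Type*} [Fintype ι] [Field K] {W : ι → K}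
    {s : Set (ι → K)} (hs : ∀ x ∈ s, x ⬝ᵥ W = 0) {x : ι → K} (hx : x ∈ Submodule.span K s) :
    x ⬝ᵥ W = 0 := by
  induction hx using Submodule.span_induction with
  | mem y hy => exact hs y hy
  | zero => exact zero_dotProduct W
  | add y z _ _ hy hz => rw [add_dotProduct, hy, hz, add_zero]
  | smul a y _ hy => rw [smul_dotProduct, hy, smul_zero]

theorem finite_setOf_sum_abs_le (ι : Type*) [Fintype ι] (m : ℤ) :
    {s : ι → ℤ | ∑ k, |s k| ≤ m}.Finite := by
  refine (Set.Finite.pi fun _ : ι => Set.finite_Icc (-m) m).subset fun s hs k _ => ?_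
  have hk : |s k| ≤ m := (Finset.single_le_sum (fun i _ => abs_nonneg (s i))
    (Finset.mem_univ k)).trans hs
  exact abs_le.mp hk

section Resonance

variable {ι : Type*} [Fintype ι]

/-- The resonances `𝒜(W, m)` of order `m`. -/
def resonances (W : ι → ℝ) (m : ℤ) : Set (ι → ℤ) :=
  {s | ∑ k, |s k| ≤ m ∧ ∑ k, (s k : ℝ) * W k = 0}

/-- The small divisors `|s·W|` of order `m`; `κ(W, m)` is their minimum. -/
def smallDivisors (W : ι → ℝ) (m : ℤ) : Set ℝ :=
  {x | ∃ s : ι → ℤ, ∑ k, |s k| ≤ m ∧ ∑ k, (s k : ℝ) * W k ≠ 0 ∧ x = |∑ k, (s k : ℝ) * W k|}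

variable {W : ι → ℝ} {m : ℤ}

theorem mem_span_resonances_iff {s : ι → ℤ} (hs : ∑ k, |s k| ≤ m) :
    (fun k => (s k : ℝ)) ∈ Submodule.span ℝ ((fun t k => (t k : ℝ)) '' resonances W m) ↔
      ∑ k, (s k : ℝ) * W k = 0 := by
  refine ⟨fun h => dotProduct_eq_zero_of_mem_span ?_ h,
    fun h => Submodule.subset_span ⟨s, ⟨hs, h⟩, rfl⟩⟩
  rintro _ ⟨t, ⟨-, ht⟩, rfl⟩
  exact ht

theorem resonant_iff_of_span_cols_eq [DecidableEq ι] (M : Matrix ι ι ℝ) (hM : IsUnit M.det)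
    {P : Set ι} (hspan : Submodule.span ℝ ((fun j i => M i j) '' P) =
      Submodule.span ℝ ((fun t k => (t k : ℝ)) '' resonances W m))
    {s : ι → ℤ} (hs : ∑ k, |s k| ≤ m) :
    (∀ j ∉ P, (fun k => (s k : ℝ)) ⬝ᵥ M.transpose⁻¹.mulVec (Pi.single j 1) = 0) ↔
      ∑ k, (s k : ℝ) * W k = 0 := by
  simp only [Matrix.dotProduct_inv_transpose_mulVec_single]
  rw [← mem_span_resonances_iff hs, ← hspan, Matrix.mem_span_cols_iff M hM]

theorem finite_smallDivisors (W : ι → ℝ) (m : ℤ) : (smallDivisors W m).Finite :=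
  ((finite_setOf_sum_abs_le ι m).image fun s => |∑ k, (s k : ℝ) * W k|).subset
    fun _ ⟨s, hs, _, hx⟩ => ⟨s, hs, hx.symm⟩

theorem sInf_smallDivisors_pos (h : (smallDivisors W m).Nonempty) :
    0 < sInf (smallDivisors W m) := by
  obtain ⟨s, -, hs, hinf⟩ := h.csInf_mem (finite_smallDivisors W m)
  exact hinf ▸ abs_pos.mpr hs

theorem sInf_smallDivisors_le {s : ι → ℤ} (hs : ∑ k, |s k| ≤ m) (hW : ∑ k, (s k : ℝ) * W k ≠ 0) :
    sInf (smallDivisors W m) ≤ |∑ k, (s k : ℝ) * W k| :=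
  csInf_le (finite_smallDivisors W m).bddBelow ⟨s, hs, hW, rfl⟩

end Resonance

section Fourier

open Complex

theorem setIntegral_Icc_exp_int_mul_I (z : ℤ) :
    ∫ θ in Set.Icc (0 : ℝ) (2 * Real.pi), exp (I * ((z : ℝ) : ℂ) * θ) =
      if z = 0 then ((2 * Real.pi : ℝ) : ℂ) else 0 := by
  rw [integral_Icc_eq_integral_Ioc, ← intervalIntegral.integral_of_le (by positivity)]
  split_ifs with hz
  · simp [hz]
  · have hIz : I * ((z : ℝ) : ℂ) ≠ 0 := mul_ne_zero I_ne_zero (by exact_mod_cast hz)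
    have hperiod : exp (I * ((z : ℝ) : ℂ) * (2 * Real.pi : ℝ)) = 1 := by
      rw [← exp_int_mul_two_pi_mul_I z]
      push_cast
      ring_nf
    rw [integral_exp_mul_complex hIz, hperiod]
    simp

theorem setIntegral_univ_pi_prod {ι : Type*} [Fintype ι] (s : Set ℝ) (g : ι → ℝ → ℂ) :
    ∫ θ : ι → ℝ in Set.univ.pi (fun _ => s), ∏ j, g j (θ j) = ∏ j, ∫ t in s, g j t := by
  rw [volume_pi, Measure.restrict_pi_pi, integral_fintype_prod_eq_prod]

theorem norm_average_exp_mul_I_sub_le {w T κ : ℝ} (hT : 0 < T) (hκ : 0 < κ)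
    (hw : w ≠ 0 → κ ≤ |w|) :
    ‖(1 / T : ℂ) * (∫ t in (0 : ℝ)..T, exp (I * w * t)) - if w = 0 then 1 else 0‖ ≤
      2 / (T * κ) := by
  split_ifs with h
  · simp [h, hT.ne']
    positivity
  have hIw : I * w ≠ 0 := mul_ne_zero I_ne_zero (ofReal_ne_zero.mpr h)
  have hnum : ‖exp (I * w * T) - 1‖ ≤ 2 := by
    calc ‖exp (I * w * T) - 1‖ ≤ ‖exp (↑(w * T) * I)‖ + ‖(1 : ℂ)‖ := by
          rw [show I * w * T = ↑(w * T) * I by push_cast; ring]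
          exact norm_sub_le _ _
      _ = 2 := by rw [norm_exp_ofReal_mul_I, norm_one]; norm_num
  rw [integral_exp_mul_complex hIw, ofReal_zero, mul_zero, exp_zero, sub_zero]
  calc ‖(1 / T : ℂ) * ((exp (I * w * T) - 1) / (I * w))‖
      = ‖exp (I * w * T) - 1‖ / (T * |w|) := by
        simp only [norm_mul, norm_div, norm_real, Real.norm_eq_abs, norm_I, norm_one, one_mul,
          abs_of_pos hT]
        ring
    _ ≤ 2 / (T * κ) := by
        gcongr
        exact hw h

variable {ι : Type*} [Fintype ι]

noncomputable def torusCharacter (s : ι → ℤ) (φ : ι → ℝ) : ℂ :=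
  exp (I * ↑(∑ k, (s k : ℝ) * φ k))

@[fun_prop]
theorem continuous_torusCharacter (s : ι → ℤ) : Continuous (torusCharacter s) := by
  unfold torusCharacter
  fun_prop

theorem torusCharacter_add (s : ι → ℤ) (φ ψ : ι → ℝ) :
    torusCharacter s (fun k => φ k + ψ k) = torusCharacter s φ * torusCharacter s ψ := by
  simp only [torusCharacter, mul_add, Finset.sum_add_distrib, ofReal_add, exp_add]

theorem norm_torusCharacter (s : ι → ℤ) (φ : ι → ℝ) : ‖torusCharacter s φ‖ = 1 := by
  rw [torusCharacter, mul_comm, norm_exp_ofReal_mul_I]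

theorem torusCharacter_mul_const (s : ι → ℤ) (W : ι → ℝ) (t : ℝ) :
    torusCharacter s (fun k => t * W k) = exp (I * ↑(∑ k, (s k : ℝ) * W k) * t) := by
  simp only [torusCharacter, mul_left_comm _ t, ← Finset.mul_sum, ofReal_mul]
  ring_nf

theorem torusCharacter_sum_mul {κ : Type*} [Fintype κ] (s : ι → ℤ) (η : κ → ι → ℝ)
    (θ : κ → ℝ) :
    torusCharacter s (fun k => ∑ j, θ j * η j k) =
      ∏ j, exp (I * ↑(∑ k, (s k : ℝ) * η j k) * θ j) := by
  have hswap : ∑ k, (s k : ℝ) * ∑ j, θ j * η j k = ∑ j, (∑ k, (s k : ℝ) * η j k) * θ j := by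
    simp only [Finset.mul_sum, Finset.sum_mul]
    rw [Finset.sum_comm]
    exact Finset.sum_congr rfl fun j _ => Finset.sum_congr rfl fun k _ => by ring
  rw [torusCharacter, hswap, ofReal_sum, Finset.mul_sum, exp_sum]
  simp only [ofReal_mul, mul_assoc]

theorem average_torusCharacter_box {κ : Type*} [Fintype κ] (s : ι → ℤ) (η : κ → ι → ℝ)
    (hη : ∀ j, ∃ z : ℤ, ∑ k, (s k : ℝ) * η j k = z) (φ : ι → ℝ) :
    ((2 * Real.pi) ^ Fintype.card κ)⁻¹ •
        ∫ θ : κ → ℝ in Set.univ.pi (fun _ => Set.Icc 0 (2 * Real.pi)),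
          torusCharacter s (fun k => φ k + ∑ j, θ j * η j k) =
      torusCharacter s φ * if ∀ j, ∑ k, (s k : ℝ) * η j k = 0 then 1 else 0 := by
  choose z hz using hη
  simp only [torusCharacter_add, torusCharacter_sum_mul, integral_const_mul, hz]
  rw [setIntegral_univ_pi_prod _ (fun j t => exp (I * ((z j : ℝ) : ℂ) * t))]
  simp only [setIntegral_Icc_exp_int_mul_I, Int.cast_eq_zero]
  split_ifs with hzero
  · rw [Finset.prod_congr rfl fun j _ => if_pos (hzero j), Finset.prod_const, Finset.card_univ,
      ← ofReal_pow, real_smul, ofReal_inv]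
    have : ((2 * Real.pi) ^ Fintype.card κ : ℂ) ≠ 0 := by simp [Real.pi_ne_zero]
    field_simp
  · obtain ⟨j, hj⟩ := not_forall.mp hzero
    rw [Finset.prod_eq_zero (Finset.mem_univ j) (if_neg hj), mul_zero, smul_zero]

theorem intervalIntegral_trigPoly_line (S : Finset (ι → ℤ)) (c : (ι → ℤ) → ℂ) (φ W : ι → ℝ)
    (T : ℝ) :
    ∫ t in (0 : ℝ)..T, ∑ s ∈ S, c s * torusCharacter s (fun k => φ k + t * W k) =
      ∑ s ∈ S, c s * torusCharacter s φ *
        ∫ t in (0 : ℝ)..T, exp (I * ↑(∑ k, (s k : ℝ) * W k) * t) := by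
  rw [intervalIntegral.integral_finsetSum fun s _ =>
    (by fun_prop : Continuous _).intervalIntegrable _ _]
  simp only [intervalIntegral.integral_const_mul, torusCharacter_add, torusCharacter_mul_const,
    mul_assoc]

theorem average_trigPoly_box {κ : Type*} [Fintype κ] (S : Finset (ι → ℤ)) (c : (ι → ℤ) → ℂ)
    (η : κ → ι → ℝ) (hη : ∀ s ∈ S, ∀ j, ∃ z : ℤ, ∑ k, (s k : ℝ) * η j k = z) (φ : ι → ℝ) :
    ((2 * Real.pi) ^ Fintype.card κ)⁻¹ •
        ∫ θ : κ → ℝ in Set.univ.pi (fun _ => Set.Icc 0 (2 * Real.pi)),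
          ∑ s ∈ S, c s * torusCharacter s (fun k => φ k + ∑ j, θ j * η j k) =
      ∑ s ∈ S, c s * torusCharacter s φ *
        if ∀ j, ∑ k, (s k : ℝ) * η j k = 0 then 1 else 0 := by
  rw [integral_finsetSum _ fun s _ => (by fun_prop : Continuous _).continuousOn.integrableOn_compact
    (isCompact_univ_pi fun _ => isCompact_Icc), Finset.smul_sum]
  refine Finset.sum_congr rfl fun s hs => ?_
  rw [integral_const_mul, ← mul_smul_comm, average_torusCharacter_box s η (hη s hs), mul_assoc]

theorem norm_average_trigPoly_sub_le (S : Finset (ι → ℤ)) (c : (ι → ℤ) → ℂ) (φ W : ι → ℝ)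
    {T κ : ℝ} (hT : 0 < T) (hκ : 0 < κ)
    (hκle : ∀ s ∈ S, ∑ k, (s k : ℝ) * W k ≠ 0 → κ ≤ |∑ k, (s k : ℝ) * W k|) :
    ‖(1 / T : ℂ) * (∑ s ∈ S, c s * torusCharacter s φ *
          ∫ t in (0 : ℝ)..T, exp (I * ↑(∑ k, (s k : ℝ) * W k) * t)) -
        ∑ s ∈ S, c s * torusCharacter s φ *
          if ∑ k, (s k : ℝ) * W k = 0 then 1 else 0‖ ≤
      2 / (T * κ) * ∑ s ∈ S, ‖c s‖ := by
  rw [Finset.mul_sum, ← Finset.sum_sub_distrib, Finset.mul_sum]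
  refine (norm_sum_le _ _).trans (Finset.sum_le_sum fun s hs => ?_)
  calc _ = ‖c s * torusCharacter s φ‖ *
        ‖(1 / T : ℂ) * (∫ t in (0 : ℝ)..T, exp (I * ↑(∑ k, (s k : ℝ) * W k) * t)) -
          if ∑ k, (s k : ℝ) * W k = 0 then 1 else 0‖ := by
        rw [← norm_mul]
        ring_nf
    _ ≤ ‖c s‖ * (2 / (T * κ)) := by
        rw [norm_mul, norm_torusCharacter, mul_one]
        gcongr
        exact norm_average_exp_mul_I_sub_le hT hκ (hκle s hs)
    _ = 2 / (T * κ) * ‖c s‖ := mul_comm _ _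

end Fourier

theorem statement10_general (n m : ℕ) (W : Fin n → ℝ)
    (A : Set (Fin n → ℤ))
    (hA : A = {s : Fin n → ℤ | (∑ k, |s k|) ≤ (m : ℤ) ∧ (∑ k, (s k : ℝ) * W k) = 0})
    (AR : Submodule ℝ (Fin n → ℝ))
    (hAR : AR = Submodule.span ℝ ((fun (s : Fin n → ℤ) (k : Fin n) => (s k : ℝ)) '' A))
    (r : ℕ)
    (ζ : Fin n → Fin n → ℤ)
    (hspan : Submodule.span ℝ
        ((fun (j : Fin n) (k : Fin n) => (ζ j k : ℝ)) '' {j : Fin n | (j : ℕ) < r}) = AR)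
    (hdet : (Matrix.of fun i j : Fin n => ζ j i).det = 1 ∨
        (Matrix.of fun i j : Fin n => ζ j i).det = -1)
    (Rmat : Matrix (Fin n) (Fin n) ℝ)
    (hRmat : Rmat = Matrix.of fun i j : Fin n => (ζ j i : ℝ))
    (η : Fin n → Fin n → ℝ)
    (hη : ∀ j : Fin n, η j = Rmat.transpose⁻¹.mulVec (Pi.single j 1))
    (S : Finset (Fin n → ℤ)) (c : (Fin n → ℤ) → ℂ)
    (hdeg : ∀ s ∈ S, (∑ k, |s k|) ≤ (m : ℤ))
    (f : (Fin n → ℝ) → ℂ)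
    (hf : ∀ φ, f φ = ∑ s ∈ S,
        c s * Complex.exp (Complex.I * Complex.ofReal (∑ k, (s k : ℝ) * φ k)))
    (favg : (Fin n → ℝ) → ℂ)
    (hfavg : ∀ φ, favg φ =
        (((2 * Real.pi) ^ (Fintype.card {j : Fin n // r ≤ (j : ℕ)}))⁻¹ : ℝ) •
          ∫ θ : {j : Fin n // r ≤ (j : ℕ)} → ℝ in
              Set.univ.pi (fun _ => Set.Icc (0:ℝ) (2 * Real.pi)),
            f (fun k => φ k + ∑ j : {j : Fin n // r ≤ (j : ℕ)}, θ j * η (j : Fin n) k))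
    (hne : {x : ℝ | ∃ s : Fin n → ℤ, (∑ k, |s k|) ≤ (m : ℤ) ∧
        (∑ k, (s k : ℝ) * W k) ≠ 0 ∧ x = |∑ k, (s k : ℝ) * W k|}.Nonempty)
    (κ : ℝ)
    (hκ : κ = sInf {x : ℝ | ∃ s : Fin n → ℤ, (∑ k, |s k|) ≤ (m : ℤ) ∧
        (∑ k, (s k : ℝ) * W k) ≠ 0 ∧ x = |∑ k, (s k : ℝ) * W k|}) :
    0 < κ ∧
    ∀ T : ℝ, 0 < T → ∀ φ : Fin n → ℝ,
      ‖(1 / T : ℂ) * (∫ t in (0:ℝ)..T, f (fun k => φ k + t * W k)) - favg φ‖ ≤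
        (2 / (T * κ)) * ∑ s ∈ S, ‖c s‖ := by
  classical
  subst hA hAR hRmat hκ
  obtain rfl : f = fun φ => ∑ s ∈ S, c s * torusCharacter s φ := funext hf
  have hZ : IsUnit (Matrix.of fun i j : Fin n => ζ j i).det := Int.isUnit_iff.mpr hdet
  have hint : ∀ (s : Fin n → ℤ) j, ∃ z : ℤ, ∑ k, (s k : ℝ) * η j k = z := fun s j => by
    rw [hη]
    exact Matrix.exists_intCast_dotProduct_inv_transpose_mulVec_single hZ s j
  have hres : ∀ s ∈ S, (∀ j : {j : Fin n // r ≤ (j : ℕ)}, ∑ k, (s k : ℝ) * η j k = 0) ↔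
      ∑ k, (s k : ℝ) * W k = 0 := fun s hs => by
    rw [← resonant_iff_of_span_cols_eq _ (Matrix.isUnit_det_map_intCast hZ) hspan (hdeg s hs)]
    simp only [hη, Set.mem_ofPred_eq, not_lt, Subtype.forall]
    rfl
  have hκ := sInf_smallDivisors_pos hne
  refine ⟨hκ, fun T hT φ => ?_⟩
  have hfavg' : favg φ = ∑ s ∈ S, c s * torusCharacter s φ *
      if ∑ k, (s k : ℝ) * W k = 0 then 1 else 0 := by
    rw [hfavg]
    exact (average_trigPoly_box S c (fun (j : {j : Fin n // r ≤ (j : ℕ)}) => η j)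
      (fun s _ j => hint s j) φ).trans
      (Finset.sum_congr rfl fun s hs => by simp only [hres s hs])
  rw [hfavg', intervalIntegral_trigPoly_line]
  exact norm_average_trigPoly_sub_le S c φ W hT hκ fun s hs => sInf_smallDivisors_le (hdeg s hs)

/-- Let `f(φ) = Σ_{s∈S} f_s e^{i s·φ}` with `|s|₁ ≤ m` for all `s ∈ S`, and
suppose `{s ∈ ℤⁿ : |s|₁ ≤ m, s·W ≠ 0}` is nonempty; let
`κ(W,m) = min{|s·W| : |s|₁ ≤ m, s·W ≠ 0} > 0`.  Then for every `T > 0` and every `φ`,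
`|(1/T)∫₀^T f(φ + tW) dt − ⟨f⟩_W(φ)| ≤ (2/(T κ(W,m))) Σ_{s∈S} |f_s|`. -/
theorem statement10 (n m : ℕ) (W : Fin n → ℝ)
    (A : Set (Fin n → ℤ))
    (hA : A = {s : Fin n → ℤ | (∑ k, |s k|) ≤ (m : ℤ) ∧ (∑ k, (s k : ℝ) * W k) = 0})
    (AR : Submodule ℝ (Fin n → ℝ))
    (hAR : AR = Submodule.span ℝ ((fun (s : Fin n → ℤ) (k : Fin n) => (s k : ℝ)) '' A))
    (r : ℕ) (hr : r = Module.finrank ℝ AR)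
    (ζ : Fin n → Fin n → ℤ)
    (hspan : Submodule.span ℝ
        ((fun (j : Fin n) (k : Fin n) => (ζ j k : ℝ)) '' {j : Fin n | (j : ℕ) < r}) = AR)
    (hdet : (Matrix.of fun i j : Fin n => ζ j i).det = 1 ∨
        (Matrix.of fun i j : Fin n => ζ j i).det = -1)
    (Rmat : Matrix (Fin n) (Fin n) ℝ)
    (hRmat : Rmat = Matrix.of fun i j : Fin n => (ζ j i : ℝ))
    (η : Fin n → Fin n → ℝ)
    (hη : ∀ j : Fin n, η j = Rmat.transpose⁻¹.mulVec (Pi.single j 1))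
    (S : Finset (Fin n → ℤ)) (c : (Fin n → ℤ) → ℂ)
    (hdeg : ∀ s ∈ S, (∑ k, |s k|) ≤ (m : ℤ))
    (f : (Fin n → ℝ) → ℂ)
    (hf : ∀ φ, f φ = ∑ s ∈ S,
        c s * Complex.exp (Complex.I * Complex.ofReal (∑ k, (s k : ℝ) * φ k)))
    (favg : (Fin n → ℝ) → ℂ)
    (hfavg : ∀ φ, favg φ =
        (((2 * Real.pi) ^ (Fintype.card {j : Fin n // r ≤ (j : ℕ)}))⁻¹ : ℝ) •
          ∫ θ : {j : Fin n // r ≤ (j : ℕ)} → ℝ in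
              Set.univ.pi (fun _ => Set.Icc (0:ℝ) (2 * Real.pi)),
            f (fun k => φ k + ∑ j : {j : Fin n // r ≤ (j : ℕ)}, θ j * η (j : Fin n) k))
    (hne : {x : ℝ | ∃ s : Fin n → ℤ, (∑ k, |s k|) ≤ (m : ℤ) ∧
        (∑ k, (s k : ℝ) * W k) ≠ 0 ∧ x = |∑ k, (s k : ℝ) * W k|}.Nonempty)
    (κ : ℝ)
    (hκ : κ = sInf {x : ℝ | ∃ s : Fin n → ℤ, (∑ k, |s k|) ≤ (m : ℤ) ∧
        (∑ k, (s k : ℝ) * W k) ≠ 0 ∧ x = |∑ k, (s k : ℝ) * W k|}) :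
    0 < κ ∧
    ∀ T : ℝ, 0 < T → ∀ φ : Fin n → ℝ,
      ‖(1 / T : ℂ) * (∫ t in (0:ℝ)..T, f (fun k => φ k + t * W k)) - favg φ‖ ≤
        (2 / (T * κ)) * ∑ s ∈ S, ‖c s‖ :=
  statement10_general n m W A hA AR hAR r ζ hspan hdet Rmat hRmat η hη S c hdeg f hf favg hfavg hne
    κ hκ
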